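/- Let Q be a closed convex subset of EuclideanSpace ℝ (Fin N), let p : Fin n → EuclideanSpace ℝ (Fin N) be a configuration that is collision-free in Q with radii ρ : Fin n → ℝ, where 0 ≤ ρ i for all i. Let P i be the power cells of (Q, p, ρ) and F i the free subcells. If q : Fin n → EuclideanSpace ℝ (Fin N) satisfies q i ∈ F i for every i, then q is also collision-free in Q with radii ρ. -/

import Mathlib

open Metric Set

/-- The power cell of index `i` for environment `Q`, points `p` and weights `w`. -/
def powerCell {N n : ℕ} (Q : Set (EuclideanSpace ℝ (Fin N)))
    (p : Fin n → EuclideanSpace ℝ (Fin N)) (w : Fin n → ℝ) (i : Fin n) :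
    Set (EuclideanSpace ℝ (Fin N)) :=
  {q ∈ Q | ∀ j, ‖q - p i‖ ^ 2 - (w i) ^ 2 ≤ ‖q - p j‖ ^ 2 - (w j) ^ 2}

/-- A configuration `p` with radii `ρ` is collision free in `Q`. -/
def CollisionFree {N n : ℕ} (Q : Set (EuclideanSpace ℝ (Fin N)))
    (p : Fin n → EuclideanSpace ℝ (Fin N)) (ρ : Fin n → ℝ) : Prop :=
  (∀ i j, i ≠ j → ρ i + ρ j < ‖p i - p j‖) ∧
    ∀ i, Metric.closedBall (p i) (ρ i) ⊆ interior Q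

/-- The free subcell of index `i`: the erosion of the power cell `P i` by the closed
ball of radius `ρ i`. -/
def freeSubcell {N n : ℕ} (Q : Set (EuclideanSpace ℝ (Fin N)))
    (p : Fin n → EuclideanSpace ℝ (Fin N)) (ρ : Fin n → ℝ) (i : Fin n) :
    Set (EuclideanSpace ℝ (Fin N)) :=
  {x ∈ powerCell Q p ρ i | ρ i < Metric.infDist x (frontier (powerCell Q p ρ i))}

/-! The ball of radius `infDist x (frontier (P i))` around a point `x` of a power cell `P i`
lies in `P i`, and `P i` lies on one side of the power bisector of `p i` and `p j`, a hyperplane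
with normal `p j - p i`, while `P j` lies on the other side. Two balls on opposite sides of a
hyperplane have radii summing to at most the distance of their centres, so the free subcells keep
robots of radius `ρ` apart with a strict margin. -/

section NormedSpace

variable {E : Type*} [NormedAddCommGroup E] [NormedSpace ℝ E]

theorem ball_infDist_frontier_subset_interior {S : Set E} {x : E} (hx : x ∈ S) :
    ball x (infDist x (frontier S)) ⊆ interior S := by
  rcases (ball x (infDist x (frontier S))).eq_empty_or_nonempty with hempty | hne
  · simp [hempty]
  have hx_ball : x ∈ ball x (infDist x (frontier S)) := mem_ball_self (nonempty_ball.mp hne)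
  have hx_int : x ∈ interior S := by
    by_contra hx_int
    exact ball_infDist_subset_compl hx_ball ⟨subset_closure hx, hx_int⟩
  refine (convex_ball _ _).isPreconnected.subset_of_closure_inter_subset isOpen_interior
    ⟨x, hx_ball, hx_int⟩ ?_
  rintro y ⟨hy_cl, hy_ball⟩
  by_contra hy_int
  exact ball_infDist_subset_compl hy_ball ⟨closure_mono interior_subset hy_cl, hy_int⟩

end NormedSpace

section InnerProductSpace

variable {E : Type*} [NormedAddCommGroup E] [InnerProductSpace ℝ E]

theorem norm_sub_sq_sub_norm_sub_sq (z a b : E) :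
    ‖z - a‖ ^ 2 - ‖z - b‖ ^ 2 = 2 * inner ℝ z (b - a) + (‖a‖ ^ 2 - ‖b‖ ^ 2) := by
  rw [norm_sub_sq_real, norm_sub_sq_real, inner_sub_right]
  ring

theorem inner_add_mul_norm_le_of_ball_subset {x u : E} {r c : ℝ} (hr : 0 < r)
    (h : ball x r ⊆ {z | inner ℝ z u ≤ c}) : inner ℝ x u + r * ‖u‖ ≤ c := by
  have hclosed : closedBall x r ⊆ {z | inner ℝ z u ≤ c} :=
    closure_ball x hr.ne' ▸ closure_minimal h (isClosed_le (by fun_prop) continuous_const)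
  rcases eq_or_ne u 0 with rfl | hu
  · simpa using h (mem_ball_self hr)
  have hu' : ‖u‖ ≠ 0 := norm_ne_zero_iff.mpr hu
  have hmem : x + (r / ‖u‖) • u ∈ closedBall x r := by
    rw [mem_closedBall, dist_self_add_left, norm_smul, Real.norm_of_nonneg (by positivity),
      div_mul_cancel₀ _ hu']
  have := hclosed hmem
  rwa [mem_ofPred_eq, inner_add_left, real_inner_smul_left, real_inner_self_eq_norm_sq, pow_two,
    ← mul_assoc, div_mul_cancel₀ _ hu'] at this

theorem add_le_dist_of_ball_subset_halfspaces {x y u : E} {r s c : ℝ} (hu : u ≠ 0)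
    (hr : 0 < r) (hs : 0 < s) (hx : ball x r ⊆ {z | inner ℝ z u ≤ c})
    (hy : ball y s ⊆ {z | c ≤ inner ℝ z u}) : r + s ≤ dist x y := by
  have hx' := inner_add_mul_norm_le_of_ball_subset hr hx
  have hy' := inner_add_mul_norm_le_of_ball_subset (u := -u) (c := -c) hs
    fun z hz => by simpa [inner_neg_right] using hy hz
  rw [inner_neg_right, norm_neg] at hy'
  have hcs : inner ℝ (y - x) u ≤ dist x y * ‖u‖ := by
    rw [dist_comm, dist_eq_norm]
    exact real_inner_le_norm _ _
  rw [inner_sub_left] at hcs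
  exact le_of_mul_le_mul_right (by linarith) (norm_pos_iff.mpr hu)

end InnerProductSpace

section PowerCell

variable {N n : ℕ} (Q : Set (EuclideanSpace ℝ (Fin N))) (p : Fin n → EuclideanSpace ℝ (Fin N))
  (w : Fin n → ℝ) (i j : Fin n)

theorem powerCell_subset_inner_le :
    powerCell Q p w i ⊆
      {z | inner ℝ z (p j - p i) ≤ (‖p j‖ ^ 2 - ‖p i‖ ^ 2 + w i ^ 2 - w j ^ 2) / 2} := by
  intro z hz
  have := hz.2 j
  have := norm_sub_sq_sub_norm_sub_sq z (p i) (p j)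
  simp only [mem_ofPred_eq]
  linarith

theorem powerCell_subset_le_inner :
    powerCell Q p w j ⊆
      {z | (‖p j‖ ^ 2 - ‖p i‖ ^ 2 + w i ^ 2 - w j ^ 2) / 2 ≤ inner ℝ z (p j - p i)} := by
  intro z hz
  have := hz.2 i
  have := norm_sub_sq_sub_norm_sub_sq z (p i) (p j)
  simp only [mem_ofPred_eq]
  linarith

end PowerCell

theorem collisionFree_of_mem_freeSubcell_general {N n : ℕ}
    (Q : Set (EuclideanSpace ℝ (Fin N)))
    (p : Fin n → EuclideanSpace ℝ (Fin N)) (ρ : Fin n → ℝ)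
    (hρ : ∀ i, 0 ≤ ρ i) (hp : CollisionFree Q p ρ)
    (q : Fin n → EuclideanSpace ℝ (Fin N))
    (hq : ∀ i, q i ∈ freeSubcell Q p ρ i) :
    CollisionFree Q q ρ := by
  have hball k : ball (q k) (infDist (q k) (frontier (powerCell Q p ρ k))) ⊆
      interior (powerCell Q p ρ k) :=
    ball_infDist_frontier_subset_interior (hq k).1
  refine ⟨fun i j hij => ?_, fun i => ?_⟩
  · have hpij : p j - p i ≠ 0 := by
      intro h
      have := hp.1 i j hij
      rw [← norm_sub_rev, h, norm_zero] at this
      linarith [hρ i, hρ j]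
    have hdist := add_le_dist_of_ball_subset_halfspaces hpij ((hρ i).trans_lt (hq i).2)
      ((hρ j).trans_lt (hq j).2)
      ((hball i).trans (interior_subset.trans (powerCell_subset_inner_le Q p ρ i j)))
      ((hball j).trans (interior_subset.trans (powerCell_subset_le_inner Q p ρ i j)))
    rw [dist_eq_norm] at hdist
    linarith [(hq i).2, (hq j).2]
  · exact (closedBall_subset_ball (hq i).2).trans
      ((hball i).trans (interior_mono fun _ hx => hx.1))

/-- Any configuration obtained by placing each robot inside its free subcell is
collision free. -/
theorem collisionFree_of_mem_freeSubcell {N n : ℕ}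
    (Q : Set (EuclideanSpace ℝ (Fin N))) (hQc : IsClosed Q) (hQconv : Convex ℝ Q)
    (p : Fin n → EuclideanSpace ℝ (Fin N)) (ρ : Fin n → ℝ)
    (hρ : ∀ i, 0 ≤ ρ i) (hp : CollisionFree Q p ρ)
    (q : Fin n → EuclideanSpace ℝ (Fin N))
    (hq : ∀ i, q i ∈ freeSubcell Q p ρ i) :
    CollisionFree Q q ρ :=
  collisionFree_of_mem_freeSubcell_general Q p ρ hρ hp q hq
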